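/- Let f : ℝⁿ → ℝ be convex with L-Lipschitz gradient with respect to the Euclidean norm, and for τ > 0 define f_τ(x) = E[f(x + τ s̃)] with s̃ uniform on the Euclidean unit ball. Then 0 ≤ f_τ(x) − f(x) ≤ L τ² / 2 for every x. -/

import Mathlib

/-!
Since the uniform distribution on the ball is symmetric, `τ s̃` has mean zero. The lower bound is
then Jensen's inequality `f x = f (E[x + τ s̃]) ≤ E[f (x + τ s̃)]`. For the upper bound, the
Lipschitz gradient gives the quadratic bound `f (x + v) ≤ f x + ⟪∇f x, v⟫ + L ‖v‖² / 2` (compare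
`t ↦ f (x + t v)` with its second-order majorant on `[0, 1]`); taking expectations at `v = τ s̃`,
the linear term vanishes and `‖τ s̃‖ ≤ |τ|`.
-/

open MeasureTheory ProbabilityTheory Set Metric
open scoped RealInnerProductSpace

section OddIntegrand

variable {G F : Type*} [AddGroup G] [MeasurableSpace G] [MeasurableNeg G]
  [NormedAddCommGroup F] [NormedSpace ℝ F] {μ : Measure G} [μ.IsNegInvariant] {f : G → F}

theorem Function.Odd.integral_eq_zero (hf : f.Odd) : ∫ x, f x ∂μ = 0 := by
  have : IsAddTorsionFree F := .of_isTorsionFree ℝ F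
  simp_rw [← self_eq_neg, ← integral_neg, ← hf.eq, integral_neg_eq_self]

theorem Function.Odd.setIntegral_eq_zero (hf : f.Odd) {s : Set G} (hs : MeasurableSet s)
    (hsymm : -s = s) : ∫ x in s, f x ∂μ = 0 := by
  have hmem : ∀ x, -x ∈ s ↔ x ∈ s := fun x => by rw [← Set.mem_neg, hsymm]
  rw [← integral_indicator hs]
  refine Function.Odd.integral_eq_zero fun x => ?_
  by_cases hx : x ∈ s
  · rw [indicator_of_mem hx, indicator_of_mem ((hmem x).2 hx), hf.eq]
  · rw [indicator_of_notMem hx, indicator_of_notMem (mt (hmem x).1 hx), neg_zero]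

end OddIntegrand

theorem integral_id_cond_closedBall_eq_zero {E : Type*} [NormedAddCommGroup E] [NormedSpace ℝ E]
    [MeasurableSpace E] [BorelSpace E] (μ : Measure E) [μ.IsNegInvariant] (r : ℝ) :
    ∫ x, x ∂μ[|closedBall 0 r] = 0 := by
  rw [ProbabilityTheory.cond, integral_smul_measure,
    Function.Odd.setIntegral_eq_zero (f := fun x : E => x) (fun _ => rfl) measurableSet_closedBall
      (by ext; simp), smul_zero]

theorem Continuous.integrable_cond_of_isCompact {α β : Type*} [TopologicalSpace α]
    [T2Space α] [MeasurableSpace α] [OpensMeasurableSpace α] [NormedAddCommGroup β] {μ : Measure α}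
    [IsFiniteMeasureOnCompacts μ] {f : α → β} (hf : Continuous f) {K : Set α} (hK : IsCompact K)
    (hK0 : μ K ≠ 0) : Integrable f μ[|K] :=
  (hf.continuousOn.integrableOn_compact hK).smul_measure (ENNReal.inv_ne_top.2 hK0)

theorem nonneg_of_norm_sub_le_mul_norm_sub {E F : Type*} [NormedAddCommGroup E] [Nontrivial E]
    [NormedAddCommGroup F] {g : E → F} {L : ℝ} (hlip : ∀ x y, ‖g x - g y‖ ≤ L * ‖x - y‖) :
    0 ≤ L := by
  obtain ⟨x, hx⟩ := exists_ne (0 : E)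
  have h := hlip x 0
  rw [sub_zero] at h
  exact nonneg_of_mul_nonneg_left ((norm_nonneg _).trans h) (norm_pos_iff.2 hx)

section Smooth

variable {E : Type*} [NormedAddCommGroup E] [InnerProductSpace ℝ E] [CompleteSpace E]
  {f : E → ℝ} {g : E → E} {L : ℝ}

theorem HasGradientAt.hasDerivAt_comp_add_smul {g' x v : E} {t : ℝ}
    (h : HasGradientAt f g' (x + t • v)) : HasDerivAt (fun t : ℝ => f (x + t • v)) ⟪g', v⟫ t := by
  have hline : HasDerivAt (fun t : ℝ => x + t • v) v t := by
    simpa using ((hasDerivAt_id t).smul_const v).const_add x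
  have := h.hasFDerivAt.comp_hasDerivAt t hline
  simp only [InnerProductSpace.toDual_apply_apply] at this
  exact this

theorem image_add_le_of_lipschitz_gradient (hgrad : ∀ x, HasGradientAt f (g x) x)
    (hlip : ∀ x y, ‖g x - g y‖ ≤ L * ‖x - y‖) (x v : E) :
    f (x + v) ≤ f x + ⟪g x, v⟫ + L * ‖v‖ ^ 2 / 2 := by
  have hderiv : ∀ t : ℝ, HasDerivAt (fun t : ℝ => f (x + t • v)) ⟪g (x + t • v), v⟫ t :=
    fun t => (hgrad _).hasDerivAt_comp_add_smul
  have hmajorant : ∀ t : ℝ, HasDerivAt (fun t => f x + t * ⟪g x, v⟫ + L * ‖v‖ ^ 2 / 2 * t ^ 2)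
      (⟪g x, v⟫ + L * ‖v‖ ^ 2 * t) t := fun t =>
    ((((hasDerivAt_id t).mul_const ⟪g x, v⟫).const_add (f x)).add
      ((hasDerivAt_pow 2 t).const_mul (L * ‖v‖ ^ 2 / 2))).congr_deriv (by norm_num; ring)
  have hslope : ∀ t ∈ Ico (0 : ℝ) 1, ⟪g (x + t • v), v⟫ ≤ ⟪g x, v⟫ + L * ‖v‖ ^ 2 * t := by
    rintro t ⟨ht, -⟩
    have hgt : ‖g (x + t • v) - g x‖ ≤ L * (t * ‖v‖) := by
      simpa [norm_smul, abs_of_nonneg ht] using hlip (x + t • v) x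
    have := (real_inner_le_norm (g (x + t • v) - g x) v).trans
      (mul_le_mul_of_nonneg_right hgt (norm_nonneg v))
    rw [inner_sub_left] at this
    linarith
  have := image_le_of_deriv_right_le_deriv_boundary
    (fun t _ => (hderiv t).continuousAt.continuousWithinAt) (fun t _ => (hderiv t).hasDerivWithinAt)
    (by simp) (fun t _ => (hmajorant t).continuousAt.continuousWithinAt)
    (fun t _ => (hmajorant t).hasDerivWithinAt) hslope (right_mem_Icc.2 zero_le_one)
  simpa using this

variable {α : Type*} [MeasurableSpace α] {μ : Measure α} [IsProbabilityMeasure μ]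
  {φ : α → E}

theorem ConvexOn.le_integral_comp_add (hf : ConvexOn ℝ univ f) (hfc : Continuous f) (x : E)
    (hφ : Integrable φ μ) (hφ0 : ∫ a, φ a ∂μ = 0) (hfφ : Integrable (fun a => f (x + φ a)) μ) :
    f x ≤ ∫ a, f (x + φ a) ∂μ := by
  have hxφ : Integrable (fun a => x + φ a) μ := (integrable_const x).add hφ
  have := hf.map_integral_le hfc.continuousOn isClosed_univ (ae_of_all _ fun _ => mem_univ _)
    hxφ hfφ
  rwa [integral_add (integrable_const x) hφ, hφ0, integral_const, probReal_univ, one_smul,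
    add_zero] at this

theorem integral_comp_add_le_of_lipschitz_gradient (hgrad : ∀ x, HasGradientAt f (g x) x)
    (hlip : ∀ x y, ‖g x - g y‖ ≤ L * ‖x - y‖) (hL : 0 ≤ L) (x : E) {r : ℝ}
    (hφ : Integrable φ μ) (hφ0 : ∫ a, φ a ∂μ = 0) (hφr : ∀ᵐ a ∂μ, ‖φ a‖ ≤ r)
    (hfφ : Integrable (fun a => f (x + φ a)) μ) :
    ∫ a, f (x + φ a) ∂μ ≤ f x + L * r ^ 2 / 2 := by
  have hinner : Integrable (fun a => ⟪g x, φ a⟫) μ := hφ.const_inner (g x)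
  have hlin : Integrable (fun a => f x + ⟪g x, φ a⟫) μ := (integrable_const _).add hinner
  calc ∫ a, f (x + φ a) ∂μ ≤ ∫ a, (f x + ⟪g x, φ a⟫ + L * r ^ 2 / 2) ∂μ := by
        refine integral_mono_ae hfφ (hlin.add (integrable_const _)) ?_
        filter_upwards [hφr] with a ha
        have := image_add_le_of_lipschitz_gradient hgrad hlip x (φ a)
        have hsq : ‖φ a‖ ^ 2 ≤ r ^ 2 := pow_le_pow_left₀ (norm_nonneg _) ha 2
        nlinarith
    _ = f x + L * r ^ 2 / 2 := by
        rw [integral_add hlin (integrable_const _),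
          integral_add (integrable_const _) hinner, integral_inner hφ, hφ0]
        simp

end Smooth

theorem smoothing_smooth_bound_general (n : ℕ) (hn : 0 < n)
    (f : EuclideanSpace ℝ (Fin n) → ℝ)
    (g : EuclideanSpace ℝ (Fin n) → EuclideanSpace ℝ (Fin n)) (L τ : ℝ)
    (hconv : ConvexOn ℝ Set.univ f)
    (hgrad : ∀ x, HasGradientAt f (g x) x)
    (hlip : ∀ x y, ‖g x - g y‖ ≤ L * ‖x - y‖)
    (μ : Measure (EuclideanSpace ℝ (Fin n)))
    (hμ : μ = (volume (Metric.closedBall (0 : EuclideanSpace ℝ (Fin n)) 1))⁻¹ •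
      volume.restrict (Metric.closedBall (0 : EuclideanSpace ℝ (Fin n)) 1))
    (fτ : EuclideanSpace ℝ (Fin n) → ℝ)
    (hfτ : ∀ x, fτ x = ∫ s, f (x + τ • s) ∂μ) :
    ∀ x, 0 ≤ fτ x - f x ∧ fτ x - f x ≤ L * τ ^ 2 / 2 := by
  intro x
  have hK0 : volume (closedBall (0 : EuclideanSpace ℝ (Fin n)) 1) ≠ 0 :=
    (measure_closedBall_pos volume 0 one_pos).ne'
  replace hμ : μ = volume[|closedBall 0 1] := hμ
  have : IsProbabilityMeasure μ :=
    hμ ▸ cond_isProbabilityMeasure_of_finite hK0 measure_closedBall_lt_top.ne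
  have : Nonempty (Fin n) := Fin.pos_iff_nonempty.1 hn
  have hfc : Continuous f :=
    continuous_iff_continuousAt.2 fun y => (hgrad y).differentiableAt.continuousAt
  have hφ : Integrable (fun s => τ • s) μ :=
    hμ ▸ (continuous_const_smul τ).integrable_cond_of_isCompact (isCompact_closedBall 0 1) hK0
  have hfφ : Integrable (fun s => f (x + τ • s)) μ :=
    hμ ▸ (hfc.comp ((continuous_const_add x).comp (continuous_const_smul τ))
      ).integrable_cond_of_isCompact (isCompact_closedBall 0 1) hK0
  have hmean : ∫ s, τ • s ∂μ = 0 := by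
    rw [integral_smul, hμ, integral_id_cond_closedBall_eq_zero, smul_zero]
  have hbound : ∀ᵐ s ∂μ, ‖τ • s‖ ≤ |τ| := by
    filter_upwards [hμ ▸ ae_cond_mem measurableSet_closedBall] with s hs
    simpa [norm_smul] using mul_le_of_le_one_right (abs_nonneg τ) (mem_closedBall_zero_iff.1 hs)
  rw [hfτ]
  constructor
  · linarith [hconv.le_integral_comp_add hfc x hφ hmean hfφ]
  · have := integral_comp_add_le_of_lipschitz_gradient hgrad hlip
      (nonneg_of_norm_sub_le_mul_norm_sub hlip) x hφ hmean hbound hfφ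
    rw [sq_abs] at this
    linarith

/-- Ball smoothing of a convex function with `L`-Lipschitz gradient:
`0 ≤ f_τ(x) − f(x) ≤ L τ² / 2`. -/
theorem smoothing_smooth_bound (n : ℕ) (hn : 0 < n)
    (f : EuclideanSpace ℝ (Fin n) → ℝ)
    (g : EuclideanSpace ℝ (Fin n) → EuclideanSpace ℝ (Fin n)) (L τ : ℝ) (hτ : 0 < τ)
    (hconv : ConvexOn ℝ Set.univ f)
    (hgrad : ∀ x, HasGradientAt f (g x) x)
    (hlip : ∀ x y, ‖g x - g y‖ ≤ L * ‖x - y‖)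
    (μ : Measure (EuclideanSpace ℝ (Fin n)))
    (hμ : μ = (volume (Metric.closedBall (0 : EuclideanSpace ℝ (Fin n)) 1))⁻¹ •
      volume.restrict (Metric.closedBall (0 : EuclideanSpace ℝ (Fin n)) 1))
    (fτ : EuclideanSpace ℝ (Fin n) → ℝ)
    (hfτ : ∀ x, fτ x = ∫ s, f (x + τ • s) ∂μ) :
    ∀ x, 0 ≤ fτ x - f x ∧ fτ x - f x ≤ L * τ ^ 2 / 2 :=
  smoothing_smooth_bound_general n hn f g L τ hconv hgrad hlip μ hμ fτ hfτ
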